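/- arXiv:1310.8078 — 2 statements merged into one kernel-verified Lean document; each statement's English description precedes it below -/
import Mathlib

section
/- Let 1 ≤ k < n and let S be the set of all permutations in S_n that are a product of two disjoint transpositions (i.e., have support of size 4 and order 2) and whose support intersects both [k] and [n] \ [k]. Then every real eigenvalue of the adjacency matrix of the Cayley graph Γ(S_n, S) is an integer. -/
/-!
Let `A = [k]` and, for `V ⊆ [n]`, let `Z V` be the sum of the double transpositions supported in
`V`, acting by the left regular representation. The adjacency matrix is
`Z [n] - Z A - Z Aᶜ`. These three matrices are symmetric and commute (`Z [n]` is a class sum, and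
`Z A`, `Z Aᶜ` involve disjointly supported permutations), so every eigenvalue of the combination
is the same combination of eigenvalues of the three, and it suffices that each `Z V` has integral
spectrum.

For this, let `J j = ∑_{a ∈ V, a < j} (a j)` be the Jucys–Murphy elements of `V`. They commute,
and `Z V` is an integral polynomial in them: splitting the products `(b j) t`, `t` a transposition
of `V`, according to whether `b` is moved by `t` gives
`Z (V ∪ {j}) = Z V + J j (∑_{i ∈ V} J i) - (J j)² + |V|` when `j > V`. Finally `J j` has integral
spectrum by induction: if `i` is the predecessor of `j` in `V`, then `s = (i j)` satisfies
`s J j = J i s + 1`, so an eigenvalue of `J j` is an eigenvalue of `J i` or differs from one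
by `±1`.
-/

def HasIntegralSpectrum (R : Type*) {A : Type*} [CommRing R] [Ring A] [Algebra R A] (a : A) :
    Prop :=
  ∀ μ ∈ spectrum R a, ∃ m : ℤ, μ = m

theorem AlgEquiv.hasIntegralSpectrum_apply_iff {R A B : Type*} [CommRing R] [Ring A] [Ring B]
    [Algebra R A] [Algebra R B] (e : A ≃ₐ[R] B) {a : A} :
    HasIntegralSpectrum R (e a) ↔ HasIntegralSpectrum R a := by
  rw [HasIntegralSpectrum, HasIntegralSpectrum, AlgEquiv.spectrum_eq]

section Field

open Module End

variable {K V : Type*} [Field K] [AddCommGroup V] [Module K V]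

/- `(L - μ) (S v) = -v`, so `S v + (a - μ)⁻¹ • v` is a `μ`-eigenvector of `L` unless it vanishes;
in that case `S v = c • v` with `c = -(a - μ)⁻¹`, and `S * S = 1` forces `c = ±1`. -/
theorem Module.End.eq_add_one_or_eq_sub_one_or_hasEigenvalue {J L S : End K V} (hS : S * S = 1)
    (hSJ : S * J = L * S + 1) {v : V} (hv : v ≠ 0) {μ a : K} (hJv : J v = μ • v)
    (hLv : L v = a • v) : μ = a + 1 ∨ μ = a - 1 ∨ L.HasEigenvalue μ := by
  by_cases hμa : μ = a
  · exact Or.inr <| Or.inr <| hμa ▸ hasEigenvalue_of_hasEigenvector ⟨mem_eigenspace_iff.2 hLv, hv⟩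
  have hSSv : S (S v) = v := by rw [← mul_apply, hS, one_apply]
  have hLSv : L (S v) = μ • S v - v := by
    have := congr($hSJ v)
    simp only [mul_apply, LinearMap.add_apply, one_apply, hJv, map_smul] at this
    rw [this, add_sub_cancel_right]
  set c := (a - μ)⁻¹
  have hc : c * (a - μ) = 1 := inv_mul_cancel₀ (sub_ne_zero.2 (Ne.symm hμa))
  by_cases hu : S v + c • v = 0
  · have hSv : S v = -c • v := by rw [neg_smul]; exact eq_neg_of_add_eq_zero_left hu
    have hc2 : c * c = 1 := by
      refine smul_left_injective K hv ?_
      calc (c * c) • v = -c • S v := by rw [hSv, smul_smul, neg_mul_neg]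
        _ = (1 : K) • v := by rw [← map_smul, ← hSv, hSSv, one_smul]
    rcases mul_self_eq_one_iff.1 hc2 with h | h
    · right; left; rw [h, one_mul] at hc; linear_combination -hc
    · left; rw [h] at hc; linear_combination hc
  · refine Or.inr <| Or.inr <| hasEigenvalue_of_hasEigenvector ⟨mem_eigenspace_iff.2 ?_, hu⟩
    rw [map_add, map_smul, hLSv, hLv, smul_add, smul_smul, smul_smul]
    linear_combination (norm := module) hc • v

end Field

section InnerProductSpace

open Module End

variable {𝕜 E : Type*} [RCLike 𝕜] [NormedAddCommGroup E] [InnerProductSpace 𝕜 E]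
  [FiniteDimensional 𝕜 E]

theorem LinearMap.IsSymmetric.exists_inf_eigenspace_ne_bot {T : End 𝕜 E} (hT : T.IsSymmetric)
    {W : Submodule 𝕜 E} (hW : W ≠ ⊥) (hTW : ∀ v ∈ W, T v ∈ W) :
    ∃ a : 𝕜, W ⊓ eigenspace T a ≠ ⊥ := by
  have : Nontrivial W := Submodule.nontrivial_iff_ne_bot.2 hW
  obtain ⟨a, ha⟩ : ∃ a, HasEigenvalue (T.restrict hTW) a :=
    ⟨_, (hT.restrict_invariant hTW).hasEigenvalue_iSup_of_finiteDimensional⟩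
  obtain ⟨w, hw, hw0⟩ := ha.exists_hasEigenvector
  refine ⟨a, fun h => hw0 ?_⟩
  have hmem := Submodule.mem_map_of_mem (f := W.subtype) hw
  rw [← Submodule.inf_genEigenspace, h, Submodule.mem_bot] at hmem
  simpa using hmem

theorem LinearMap.IsSymmetric.exists_common_eigenvector {ι : Type*} {s : Finset ι}
    {T : ι → End 𝕜 E} (hs : ∀ i ∈ s, (T i).IsSymmetric)
    (hc : ∀ i ∈ s, ∀ j ∈ s, Commute (T i) (T j)) {W : Submodule 𝕜 E} (hW : W ≠ ⊥)
    (hsW : ∀ i ∈ s, ∀ v ∈ W, T i v ∈ W) :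
    ∃ v ∈ W, v ≠ 0 ∧ ∀ i ∈ s, ∃ a : 𝕜, T i v = a • v := by
  classical
  induction s using Finset.induction_on generalizing W with
  | empty =>
    obtain ⟨v, hvW, hv⟩ := Submodule.exists_mem_ne_zero_of_ne_bot hW
    exact ⟨v, hvW, hv, by simp⟩
  | insert i s _ ih =>
    simp only [Finset.mem_insert, forall_eq_or_imp] at hs hsW hc ⊢
    obtain ⟨a, ha⟩ := hs.1.exists_inf_eigenspace_ne_bot hW hsW.1
    obtain ⟨v, hv, hv0, hvs⟩ := ih hs.2 (fun j hj k hk => (hc.2 j hj).2 k hk) ha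
      fun j hj v hv => ⟨hsW.2 j hj v (Submodule.mem_inf.1 hv).1,
        mapsTo_genEigenspace_of_comm (hc.1.2 j hj) a 1 (Submodule.mem_inf.1 hv).2⟩
    exact ⟨v, (Submodule.mem_inf.1 hv).1, hv0,
      ⟨a, mem_eigenspace_iff.1 (Submodule.mem_inf.1 hv).2⟩, hvs⟩

/- A common eigenvector of the generators is an eigenvector of every element of the ring they
generate, with an integral eigenvalue. -/
theorem hasIntegralSpectrum_of_mem_closure {ι : Type*} {s : Finset ι} {T : ι → End 𝕜 E}
    (hs : ∀ i ∈ s, (T i).IsSymmetric) (hc : ∀ i ∈ s, ∀ j ∈ s, Commute (T i) (T j))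
    (hi : ∀ i ∈ s, HasIntegralSpectrum 𝕜 (T i)) {X : End 𝕜 E}
    (hX : X ∈ Subring.closure (T '' s)) : HasIntegralSpectrum 𝕜 X := by
  intro μ hμ
  have hXs : ∀ i ∈ s, Commute X (T i) := by
    intro i hi
    have : Subring.closure (T '' s) ≤ Subring.centralizer {T i} := by
      refine Subring.closure_le.2 ?_
      rintro _ ⟨j, hj, rfl⟩ _ rfl
      exact (hc j hj i hi).eq.symm
    exact (Subring.mem_centralizer_iff.1 (this hX) (T i) rfl).symm
  obtain ⟨v, hvX, hv0, hvs⟩ := LinearMap.IsSymmetric.exists_common_eigenvector hs hc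
    (hasEigenvalue_iff_mem_spectrum.2 hμ) fun i hi => mapsTo_genEigenspace_of_comm (hXs i hi) μ 1
  have hint : ∀ Y ∈ Subring.closure (T '' s), ∃ m : ℤ, Y v = (m : 𝕜) • v := by
    intro Y hY
    induction hY using Subring.closure_induction with
    | mem _ hY =>
      obtain ⟨i, his, rfl⟩ := hY
      obtain ⟨a, ha⟩ := hvs i his
      obtain ⟨m, rfl⟩ := hi i his a <| hasEigenvalue_iff_mem_spectrum.1 <|
        hasEigenvalue_of_hasEigenvector ⟨mem_eigenspace_iff.2 ha, hv0⟩
      exact ⟨m, ha⟩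
    | zero => exact ⟨0, by simp⟩
    | one => exact ⟨1, by simp⟩
    | add Y Z _ _ hY hZ =>
      obtain ⟨⟨m, hm⟩, ⟨k, hk⟩⟩ := And.intro hY hZ
      exact ⟨m + k, by simp [hm, hk, add_smul]⟩
    | neg Y _ hY =>
      obtain ⟨m, hm⟩ := hY
      exact ⟨-m, by simp [hm]⟩
    | mul Y Z _ _ hY hZ =>
      obtain ⟨⟨m, hm⟩, ⟨k, hk⟩⟩ := And.intro hY hZ
      exact ⟨m * k, by simp [hm, hk, smul_smul, mul_comm]⟩
  obtain ⟨m, hm⟩ := hint X hX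
  exact ⟨m, smul_left_injective 𝕜 hv0 ((mem_eigenspace_iff.1 hvX).symm.trans hm)⟩

theorem hasIntegralSpectrum_of_mul_eq_mul_add_one {J L S : End 𝕜 E} (hS : S * S = 1)
    (hSJ : S * J = L * S + 1) (hL : L.IsSymmetric) (hJL : Commute J L)
    (hLi : HasIntegralSpectrum 𝕜 L) : HasIntegralSpectrum 𝕜 J := by
  intro μ hμ
  obtain ⟨a, ha⟩ := hL.exists_inf_eigenspace_ne_bot (hasEigenvalue_iff_mem_spectrum.2 hμ)
    fun v hv => mapsTo_genEigenspace_of_comm hJL μ 1 hv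
  obtain ⟨v, hv, hv0⟩ := Submodule.exists_mem_ne_zero_of_ne_bot ha
  have hLv := mem_eigenspace_iff.1 (Submodule.mem_inf.1 hv).2
  obtain ⟨m, rfl⟩ := hLi a <| hasEigenvalue_iff_mem_spectrum.1 <|
    hasEigenvalue_of_hasEigenvector ⟨mem_eigenspace_iff.2 hLv, hv0⟩
  rcases eq_add_one_or_eq_sub_one_or_hasEigenvalue hS hSJ hv0
    (mem_eigenspace_iff.1 (Submodule.mem_inf.1 hv).1) hLv with h | h | h
  · exact ⟨m + 1, by push_cast; exact h⟩
  · exact ⟨m - 1, by push_cast; exact h⟩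
  · exact hLi μ (hasEigenvalue_iff_mem_spectrum.1 h)

end InnerProductSpace

namespace Matrix

variable {𝕜 ι : Type*} [RCLike 𝕜] [Fintype ι] [DecidableEq ι]

theorem IsHermitian.isSymmetric_toLpLinAlgEquiv {A : Matrix ι ι 𝕜} (hA : A.IsHermitian) :
    (toLpLinAlgEquiv 2 A).IsSymmetric :=
  isSymmetric_toEuclideanLin_iff.2 hA

theorem hasIntegralSpectrum_of_mem_closure {κ : Type*} {s : Finset κ} {A : κ → Matrix ι ι 𝕜}
    (hs : ∀ i ∈ s, (A i).IsHermitian) (hc : ∀ i ∈ s, ∀ j ∈ s, Commute (A i) (A j))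
    (hi : ∀ i ∈ s, HasIntegralSpectrum 𝕜 (A i)) {X : Matrix ι ι 𝕜}
    (hX : X ∈ Subring.closure (A '' s)) : HasIntegralSpectrum 𝕜 X := by
  set e := toLpLinAlgEquiv (R := 𝕜) (n := ι) 2
  rw [← e.hasIntegralSpectrum_apply_iff]
  refine _root_.hasIntegralSpectrum_of_mem_closure (T := e ∘ A)
    (fun i h => (hs i h).isSymmetric_toLpLinAlgEquiv) (fun i h j h' => (hc i h j h').map e)
    (fun i h => e.hasIntegralSpectrum_apply_iff.2 (hi i h)) ?_
  rw [Set.image_comp]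
  exact Subring.mem_closure_image_of e.toRingHom hX

theorem hasIntegralSpectrum_of_mul_eq_mul_add_one {J L S : Matrix ι ι 𝕜} (hS : S * S = 1)
    (hSJ : S * J = L * S + 1) (hL : L.IsHermitian) (hJL : Commute J L)
    (hLi : HasIntegralSpectrum 𝕜 L) : HasIntegralSpectrum 𝕜 J := by
  set e := toLpLinAlgEquiv (R := 𝕜) (n := ι) 2
  rw [← e.hasIntegralSpectrum_apply_iff] at hLi ⊢
  exact _root_.hasIntegralSpectrum_of_mul_eq_mul_add_one (S := e S)
    (by rw [← map_mul, hS, map_one]) (by rw [← map_mul, hSJ, map_add, map_mul, map_one])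
    hL.isSymmetric_toLpLinAlgEquiv (hJL.map e) hLi

end Matrix

open Finset Equiv

section RegularMatrix

open Matrix

variable (R : Type*) [Semiring R] {G : Type*} [Group G] [Fintype G] [DecidableEq G]

def regularMatrix : G →* Matrix G G R where
  toFun g := of fun x y => if x = g * y then 1 else 0
  map_one' := by ext x y; simp [one_apply]
  map_mul' g h := by
    ext x y
    simp [mul_apply, mul_assoc]

variable {R}

theorem regularMatrix_apply (g x y : G) :
    regularMatrix R g x y = if x = g * y then 1 else 0 := rfl

theorem conjTranspose_regularMatrix [StarRing R] (g : G) :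
    (regularMatrix R g)ᴴ = regularMatrix R g⁻¹ := by
  ext x y
  simp only [conjTranspose_apply, regularMatrix_apply, eq_inv_mul_iff_mul_eq, eq_comm (a := y)]
  split_ifs <;> simp

theorem isHermitian_regularMatrix [StarRing R] {g : G} (hg : g * g = 1) :
    (regularMatrix R g).IsHermitian := by
  rw [IsHermitian, conjTranspose_regularMatrix, inv_eq_of_mul_eq_one_right hg]

theorem commute_sum_regularMatrix {C : Finset G} {g : G} (hC : ∀ c, g * c * g⁻¹ ∈ C ↔ c ∈ C) :
    Commute (∑ c ∈ C, regularMatrix R c) (regularMatrix R g) := by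
  simp only [Commute, SemiconjBy, sum_mul, mul_sum, ← map_mul]
  exact (sum_equiv (MulAut.conj g).toEquiv (by simpa using fun c => (hC c).symm)
    fun c _ => by simp [mul_assoc]).symm

theorem SimpleGraph.adjMatrix_eq_sum_regularMatrix (Γ : SimpleGraph G) [DecidableRel Γ.Adj]
    {C : Finset G} (hΓ : ∀ u v, Γ.Adj u v ↔ v * u⁻¹ ∈ C) :
    Γ.adjMatrix R = ∑ c ∈ C, regularMatrix R c := by
  ext x y
  have hxy (c : G) : x = c * y ↔ c = x * y⁻¹ := by rw [eq_mul_inv_iff_mul_eq, eq_comm]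
  simp only [adjMatrix_apply, Matrix.sum_apply, regularMatrix_apply, hxy, sum_ite_eq',
    Γ.adj_comm x, hΓ]

end RegularMatrix

theorem Finset.subset_insert_and_notMem_iff {α : Type*} [DecidableEq α] {s V : Finset α} {j : α}
    (hj : j ∉ V) : s ⊆ insert j V ∧ j ∉ s ↔ s ⊆ V :=
  ⟨fun h => (subset_insert_iff_of_notMem h.2).1 h.1,
    fun h => ⟨h.trans (subset_insert _ _), fun h' => hj (h h')⟩⟩

namespace Equiv.Perm

variable {α : Type*} [DecidableEq α]

theorem IsSwap.eq_swap_apply {t : Perm α} (ht : t.IsSwap) {x : α} (hx : t x ≠ x) :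
    t = swap x (t x) := by
  obtain ⟨y, z, -, rfl⟩ := ht
  by_cases hy : x = y
  · subst hy; simp
  by_cases hz : x = z
  · subst hz; simp [swap_comm]
  simp [swap_apply_of_ne_of_ne hy hz] at hx

variable [Fintype α]

theorem apply_mem_iff_of_support_subset {g : Perm α} {V : Finset α} (hg : g.support ⊆ V)
    (x : α) : g x ∈ V ↔ x ∈ V := by
  by_cases hx : g x = x
  · rw [hx]
  · exact ⟨fun _ => hg (mem_support.2 hx), fun _ => hg (apply_mem_support.2 (mem_support.2 hx))⟩

theorem support_swap_apply_mul_of_mul_self {σ : Perm α} (hσ : σ * σ = 1) (j : α) :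
    (swap (σ j) j * σ).support = σ.support \ {σ j, j} := by
  have hσσ (x : α) : σ (σ x) = x := by rw [← mul_apply, hσ, one_apply]
  ext x
  simp only [mem_support, mem_sdiff, mem_insert, mem_singleton, mul_apply]
  by_cases hxj : x = j
  · subst hxj; simp
  by_cases hxb : x = σ j
  · subst hxb; simp [hσσ]
  have h1 : σ x ≠ σ j := fun h => hxj (σ.injective h)
  have h2 : σ x ≠ j := fun h => hxb (by rw [← h, hσσ])
  simp [swap_apply_of_ne_of_ne h1 h2, hxj, hxb]

end Equiv.Perm

section Transpositions

variable (R : Type*) [Ring R] {α : Type*} [Fintype α] [DecidableEq α]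

def transpositions (V : Finset α) : Finset (Perm α) :=
  {t | #t.support = 2 ∧ t.support ⊆ V}

noncomputable def doubleTranspositions (V : Finset α) : Finset (Perm α) :=
  {σ | orderOf σ = 2 ∧ #σ.support = 4 ∧ σ.support ⊆ V}

def swapSum (V : Finset α) (j : α) : Matrix (Perm α) (Perm α) R :=
  ∑ a ∈ V, regularMatrix R (swap a j)

def transpositionSum (V : Finset α) : Matrix (Perm α) (Perm α) R :=
  ∑ t ∈ transpositions V, regularMatrix R t

noncomputable def doubleTranspositionSum (V : Finset α) : Matrix (Perm α) (Perm α) R :=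
  ∑ σ ∈ doubleTranspositions V, regularMatrix R σ

noncomputable def crossingDoubleTranspositions (A : Finset α) : Finset (Perm α) :=
  {σ ∈ doubleTranspositions univ | ¬σ.support ⊆ Aᶜ ∧ ¬σ.support ⊆ A}

variable {R}

theorem isHermitian_swapSum [StarRing R] (V : Finset α) (j : α) :
    (swapSum R V j).IsHermitian :=
  isSelfAdjoint_sum V fun a _ => isHermitian_regularMatrix (Equiv.swap_mul_self a j)

theorem isHermitian_doubleTranspositionSum [StarRing R] (V : Finset α) :
    (doubleTranspositionSum R V).IsHermitian :=
  isSelfAdjoint_sum _ fun σ hσ => isHermitian_regularMatrix <| by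
    rw [← sq, ← (mem_filter.1 hσ).2.1, pow_orderOf_eq_one]

theorem transpositionSum_insert {V : Finset α} {j : α} (hj : j ∉ V) :
    transpositionSum R (insert j V) = transpositionSum R V + swapSum R V j := by
  rw [transpositionSum, ← sum_filter_add_sum_filter_not _ (fun t => j ∉ t.support)]
  congr 1
  · refine sum_congr ?_ fun _ _ => rfl
    ext t
    simp only [transpositions, mem_filter, mem_univ, true_and, and_assoc,
      subset_insert_and_notMem_iff hj]
  · symm
    refine sum_nbij' (fun a => swap a j) (fun t => t j) ?_ ?_ ?_ ?_ fun _ _ => rfl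
    · intro a ha
      have haj : a ≠ j := ne_of_mem_of_not_mem ha hj
      simp [transpositions, Perm.support_swap haj, haj, insert_subset_iff, ha]
    · simp only [transpositions, mem_filter, mem_univ, true_and, not_not, and_imp]
      intro t _ hV htj
      exact (mem_insert.1 (hV (Perm.apply_mem_support.2 htj))).resolve_left
        (Perm.mem_support.1 htj)
    · intro a _
      simp
    · simp only [transpositions, mem_filter, mem_univ, true_and, not_not, and_imp]
      intro t h2 _ htj
      rw [swap_comm, ← (Perm.card_support_eq_two.1 h2).eq_swap_apply (Perm.mem_support.1 htj)]

theorem commute_swapSum {V : Finset α} {j : α} (hj : j ∉ V) {g : Perm α} (hg : g.support ⊆ V) :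
    Commute (swapSum R V j) (regularMatrix R g) := by
  have hgj : g j = j := Perm.notMem_support.1 fun h => hj (hg h)
  simp only [Commute, SemiconjBy, swapSum, sum_mul, mul_sum, ← map_mul, mul_swap_eq_swap_mul, hgj]
  exact (sum_equiv g (fun a => (Perm.apply_mem_iff_of_support_subset hg a).symm)
    fun _ _ => rfl).symm

theorem regularMatrix_swap_mul_swapSum_insert {V : Finset α} {i j : α} (hi : i ∉ V)
    (hj : j ∉ V) :
    regularMatrix R (swap i j) * swapSum R (insert i V) j =
      swapSum R V i * regularMatrix R (swap i j) + 1 := by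
  rw [swapSum, sum_insert hi, mul_add, ← map_mul, Equiv.swap_mul_self, map_one, add_comm, swapSum,
    mul_sum, sum_mul]
  refine congrArg (· + 1) (sum_congr rfl fun a ha => ?_)
  rw [← map_mul, ← map_mul, mul_swap_eq_swap_mul,
    swap_apply_of_ne_of_ne (ne_of_mem_of_not_mem ha hi) (ne_of_mem_of_not_mem ha hj),
    swap_apply_right]

theorem swap_mul_mem_doubleTranspositions {V : Finset α} {b j : α} {t : Perm α} (hb : b ∈ V)
    (hj : j ∉ V) (ht : t ∈ transpositions V) (hbt : b ∉ t.support) :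
    swap b j * t ∈ doubleTranspositions (insert j V) ∧ j ∈ (swap b j * t).support := by
  simp only [transpositions, mem_filter, mem_univ, true_and] at ht
  have hbj : b ≠ j := ne_of_mem_of_not_mem hb hj
  have hjt : j ∉ t.support := fun h => hj (ht.2 h)
  have hdisj : (swap b j).Disjoint t := by
    rw [Perm.disjoint_iff_disjoint_support, Perm.support_swap hbj]
    simp [hbt, hjt]
  have hsupp : (swap b j * t).support = {b, j} ∪ t.support := by
    rw [hdisj.support_mul, Perm.support_swap hbj]
  simp only [doubleTranspositions, mem_filter, mem_univ, true_and, hsupp]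
  refine ⟨⟨?_, ?_, ?_⟩, by simp⟩
  · rw [hdisj.orderOf, (Perm.card_support_eq_two.1 (Perm.card_support_swap hbj)).orderOf,
      (Perm.card_support_eq_two.1 ht.1).orderOf, Nat.lcm_self]
  · rw [card_union_of_disjoint (by simp [hbt, hjt]), card_pair hbj, ht.1]
  · exact union_subset (by simp [insert_subset_iff, hb]) (ht.2.trans (subset_insert _ _))

theorem swap_apply_mul_mem_transpositions {V : Finset α} {j : α} {σ : Perm α}
    (hσ : σ ∈ doubleTranspositions (insert j V)) (hj : j ∈ σ.support) :
    σ j ∈ V ∧ swap (σ j) j * σ ∈ transpositions V ∧ σ j ∉ (swap (σ j) j * σ).support := by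
  simp only [doubleTranspositions, mem_filter, mem_univ, true_and] at hσ
  obtain ⟨h2, h4, hV⟩ := hσ
  have hσσ : σ * σ = 1 := by rw [← sq, ← h2, pow_orderOf_eq_one]
  have hb : σ j ∈ σ.support := Perm.apply_mem_support.2 hj
  have hbj : σ j ≠ j := Perm.mem_support.1 hj
  simp only [transpositions, mem_filter, mem_univ, true_and,
    Perm.support_swap_apply_mul_of_mul_self hσσ]
  refine ⟨(mem_insert.1 (hV hb)).resolve_left hbj, ⟨?_, ?_⟩, by simp⟩
  · rw [card_sdiff_of_subset (by simp [insert_subset_iff, hb, hj]), h4, card_pair hbj]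
  · intro x hx
    simp only [mem_sdiff, mem_insert, mem_singleton, not_or] at hx
    exact (mem_insert.1 (hV hx.1)).resolve_left hx.2.2

theorem sum_swap_mul_transpositions_filter_notMem {V : Finset α} {j : α} (hj : j ∉ V) :
    ∑ p ∈ V ×ˢ transpositions V with p.1 ∉ p.2.support, regularMatrix R (swap p.1 j * p.2) =
      ∑ σ ∈ doubleTranspositions (insert j V) with j ∈ σ.support, regularMatrix R σ := by
  refine sum_nbij' (fun p => swap p.1 j * p.2) (fun σ => (σ j, swap (σ j) j * σ)) ?_ ?_ ?_ ?_
    fun _ _ => rfl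
  · simp only [mem_filter, mem_product, and_imp, Prod.forall]
    exact fun b t hb ht hbt => swap_mul_mem_doubleTranspositions hb hj ht hbt
  · simp only [mem_filter, mem_product, and_imp]
    intro σ hσ hjσ
    obtain ⟨hb, ht, hbt⟩ := swap_apply_mul_mem_transpositions hσ hjσ
    exact ⟨⟨hb, ht⟩, hbt⟩
  · simp only [transpositions, mem_filter, mem_product, mem_univ, true_and, and_imp, Prod.forall]
    intro b t _ _ hV _
    simp [Perm.notMem_support.1 fun h => hj (hV h)]
  · intro σ _
    simp

theorem sum_swap_mul_transpositions_filter_mem {V : Finset α} {j : α} (hj : j ∉ V) :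
    ∑ p ∈ V ×ˢ transpositions V with p.1 ∈ p.2.support, regularMatrix R (swap p.1 j * p.2) =
      swapSum R V j * swapSum R V j - #V := by
  have hdiag : ∑ q ∈ V.diag, regularMatrix R (swap q.1 j) * regularMatrix R (swap q.2 j) = #V := by
    rw [sum_congr rfl fun q hq => by
        rw [(mem_diag.1 hq).2, ← map_mul, Equiv.swap_mul_self, map_one],
      sum_const, diag_card, nsmul_one]
  rw [eq_sub_iff_add_eq, swapSum, sum_mul_sum, ← sum_product', ← diag_union_offDiag,
    sum_union (disjoint_diag_offDiag V), hdiag, add_comm]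
  congr 1
  refine sum_nbij' (fun p => (p.2 p.1, p.1)) (fun q => (q.2, swap q.2 q.1)) ?_ ?_ ?_ ?_ ?_
  · simp only [transpositions, mem_filter, mem_product, mem_univ, true_and, mem_offDiag, and_imp,
      Prod.forall]
    intro b t hb _ hV hbt
    exact ⟨hV (Perm.apply_mem_support.2 hbt), hb, Perm.mem_support.1 hbt⟩
  · simp only [transpositions, mem_filter, mem_product, mem_univ, true_and, mem_offDiag, and_imp,
      Prod.forall]
    intro a b ha hb hab
    simp [Perm.support_swap (Ne.symm hab), card_pair (Ne.symm hab), insert_subset_iff, ha, hb]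
  · simp only [transpositions, mem_filter, mem_product, mem_univ, true_and, and_imp, Prod.forall]
    intro b t _ h2 _ hbt
    simp [← (Perm.card_support_eq_two.1 h2).eq_swap_apply (Perm.mem_support.1 hbt)]
  · intro q _
    simp
  · simp only [transpositions, mem_filter, mem_product, mem_univ, true_and, and_imp, Prod.forall]
    intro b t _ h2 hV hbt
    have hta : t b ≠ j := fun h => hj (h ▸ hV (Perm.apply_mem_support.2 hbt))
    conv_lhs => rw [(Perm.card_support_eq_two.1 h2).eq_swap_apply (Perm.mem_support.1 hbt)]
    rw [← map_mul, mul_swap_eq_swap_mul, swap_apply_left,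
      swap_apply_of_ne_of_ne (Perm.mem_support.1 hbt) hta, swap_comm]

/- In the products `(b j) t`, `t` a transposition of `V`, the `t` not moving `b` give each double
transposition moving `j` once, and the others give the 3-cycles `(b j) (b a) = (a j) (b j)` that
also make up the off-diagonal part of `(swapSum V j)²`. -/
theorem doubleTranspositionSum_insert {V : Finset α} {j : α} (hj : j ∉ V) :
    doubleTranspositionSum R (insert j V) = doubleTranspositionSum R V +
      swapSum R V j * transpositionSum R V - swapSum R V j * swapSum R V j + #V := by
  have hST : swapSum R V j * transpositionSum R V =
      ∑ p ∈ V ×ˢ transpositions V, regularMatrix R (swap p.1 j * p.2) := by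
    simp [swapSum, transpositionSum, sum_mul_sum, sum_product]
  have hDT : {σ ∈ doubleTranspositions (insert j V) | j ∉ σ.support} =
      doubleTranspositions V := by
    ext σ
    simp only [doubleTranspositions, mem_filter, mem_univ, true_and, and_assoc,
      subset_insert_and_notMem_iff hj]
  rw [hST, ← sum_filter_not_add_sum_filter _ (fun p => p.1 ∈ p.2.support),
    sum_swap_mul_transpositions_filter_mem hj, sum_swap_mul_transpositions_filter_notMem hj,
    doubleTranspositionSum, doubleTranspositionSum,
    ← sum_filter_not_add_sum_filter (doubleTranspositions (insert j V)) (j ∈ ·.support), hDT]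
  abel

theorem commute_doubleTranspositionSum_univ_regularMatrix (g : Perm α) :
    Commute (doubleTranspositionSum R (univ : Finset α)) (regularMatrix R g) := by
  refine commute_sum_regularMatrix fun σ => ?_
  have horder : orderOf (g * σ * g⁻¹) = orderOf σ := (MulAut.conj g).orderOf_eq σ
  simp [doubleTranspositions, horder, Perm.support_conj]

theorem commute_doubleTranspositionSum_univ (V : Finset α) :
    Commute (doubleTranspositionSum R (univ : Finset α)) (doubleTranspositionSum R V) :=
  Commute.sum_right _ _ _ fun σ _ => commute_doubleTranspositionSum_univ_regularMatrix σ

theorem commute_doubleTranspositionSum_of_disjoint {A B : Finset α} (hAB : Disjoint A B) :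
    Commute (doubleTranspositionSum R A) (doubleTranspositionSum R B) := by
  refine Commute.sum_left _ _ _ fun σ hσ => Commute.sum_right _ _ _ fun τ hτ => ?_
  simp only [doubleTranspositions, mem_filter] at hσ hτ
  exact (Perm.disjoint_iff_disjoint_support.2 (hAB.mono hσ.2.2.2 hτ.2.2.2)).commute.map _

theorem sum_crossingDoubleTranspositions (A : Finset α) :
    ∑ σ ∈ crossingDoubleTranspositions A, regularMatrix R σ =
      doubleTranspositionSum R univ - doubleTranspositionSum R A - doubleTranspositionSum R Aᶜ := by
  have hV (V : Finset α) : doubleTranspositionSum R V =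
      ∑ σ ∈ doubleTranspositions univ, if σ.support ⊆ V then regularMatrix R σ else 0 := by
    rw [← sum_filter, doubleTranspositionSum]
    congr 1
    ext σ
    simp [doubleTranspositions, and_assoc]
  rw [crossingDoubleTranspositions, sum_filter, hV A, hV Aᶜ, doubleTranspositionSum,
    ← sum_sub_distrib, ← sum_sub_distrib]
  refine sum_congr rfl fun σ hσ => ?_
  obtain ⟨x, hx⟩ : σ.support.Nonempty :=
    card_pos.1 (by rw [(mem_filter.1 hσ).2.2.1]; norm_num)
  by_cases h1 : σ.support ⊆ A
  · have h2 : ¬σ.support ⊆ Aᶜ := fun h2 => mem_compl.1 (h2 hx) (h1 hx)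
    simp [h1, h2]
  · by_cases h2 : σ.support ⊆ Aᶜ <;> simp [h1, h2]

end Transpositions

section JucysMurphy

variable (R : Type*) [Ring R] {α : Type*} [Fintype α] [LinearOrder α]

def jucysMurphy (U : Finset α) (i : α) : Matrix (Perm α) (Perm α) R :=
  swapSum R {a ∈ U | a < i} i

variable {R}

theorem commute_jucysMurphy_of_lt {U : Finset α} {i j : α} (hi : i ∈ U) (hij : i < j) :
    Commute (jucysMurphy R U j) (jucysMurphy R U i) := by
  refine Commute.sum_right _ _ _ fun a ha => commute_swapSum (by simp) ?_
  rw [mem_filter] at ha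
  rw [Perm.support_swap ha.2.ne]
  simp [insert_subset_iff, ha.1, hi, hij, ha.2.trans hij]

theorem commute_jucysMurphy {U : Finset α} {i j : α} (hi : i ∈ U) (hj : j ∈ U) :
    Commute (jucysMurphy R U i) (jucysMurphy R U j) := by
  rcases lt_trichotomy i j with h | rfl | h
  · exact (commute_jucysMurphy_of_lt hi h).symm
  · exact Commute.refl _
  · exact commute_jucysMurphy_of_lt hj h

theorem doubleTranspositionSum_mem_closure (U : Finset α) :
    doubleTranspositionSum R U ∈ Subring.closure (jucysMurphy R U '' U) := by
  suffices doubleTranspositionSum R U ∈ Subring.closure (jucysMurphy R U '' U) ∧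
      transpositionSum R U ∈ Subring.closure (jucysMurphy R U '' U) from this.1
  induction U using Finset.induction_on_max with
  | empty =>
    have hZ : doubleTranspositionSum R (∅ : Finset α) = 0 :=
      sum_eq_zero fun σ hσ => absurd (mem_filter.1 hσ).2 fun ⟨_, h4, h⟩ => by
        simp [subset_empty.1 h] at h4
    have hT : transpositionSum R (∅ : Finset α) = 0 :=
      sum_eq_zero fun t ht => absurd (mem_filter.1 ht).2 fun ⟨h2, h⟩ => by
        simp [subset_empty.1 h] at h2
    rw [hZ, hT]
    exact ⟨zero_mem _, zero_mem _⟩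
  | insert j V hV ih =>
    have hj : j ∉ V := fun h => lt_irrefl j (hV j h)
    have hS : swapSum R V j ∈ Subring.closure (jucysMurphy R (insert j V) '' ↑(insert j V)) := by
      refine Subring.subset_closure ⟨j, mem_insert_self j V, ?_⟩
      rw [jucysMurphy, filter_insert, if_neg (lt_irrefl j), filter_true_of_mem hV]
    have hmono : Subring.closure (jucysMurphy R V '' V) ≤
        Subring.closure (jucysMurphy R (insert j V) '' ↑(insert j V)) := by
      refine Subring.closure_mono ?_
      rintro _ ⟨i, hi, rfl⟩
      refine ⟨i, mem_insert_of_mem hi, ?_⟩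
      rw [jucysMurphy, jucysMurphy, filter_insert, if_neg (hV i hi).not_gt]
    rw [doubleTranspositionSum_insert hj, transpositionSum_insert hj]
    exact ⟨add_mem (sub_mem (add_mem (hmono ih.1) (mul_mem hS (hmono ih.2))) (mul_mem hS hS))
      (natCast_mem _ _), add_mem (hmono ih.2) hS⟩

end JucysMurphy

section Integrality

variable {𝕜 : Type*} [RCLike 𝕜] {α : Type*} [Fintype α]

theorem hasIntegralSpectrum_swapSum [DecidableEq α] {V : Finset α} {j : α} (hj : j ∉ V) :
    HasIntegralSpectrum 𝕜 (swapSum 𝕜 V j) := by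
  induction V using Finset.induction_on generalizing j with
  | empty =>
    intro μ hμ
    rw [swapSum, sum_empty, spectrum.zero_eq, Set.mem_singleton_iff] at hμ
    exact ⟨0, by simp [hμ]⟩
  | insert i V hi ih =>
    rw [mem_insert, not_or] at hj
    refine Matrix.hasIntegralSpectrum_of_mul_eq_mul_add_one
      (S := regularMatrix 𝕜 (swap i j)) (by rw [← map_mul, Equiv.swap_mul_self, map_one])
      (regularMatrix_swap_mul_swapSum_insert hi hj.2) (isHermitian_swapSum V i) ?_ (ih hi)
    refine Commute.sum_right _ _ _ fun a ha => commute_swapSum (by simp [hj.1, hj.2]) ?_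
    rw [Perm.support_swap (ne_of_mem_of_not_mem ha hi)]
    simp [insert_subset_iff, ha]

variable [LinearOrder α]

theorem hasIntegralSpectrum_doubleTranspositionSum (U : Finset α) :
    HasIntegralSpectrum 𝕜 (doubleTranspositionSum 𝕜 U) :=
  Matrix.hasIntegralSpectrum_of_mem_closure (fun i _ => isHermitian_swapSum _ i)
    (fun _ hi _ hj => commute_jucysMurphy hi hj)
    (fun _ _ => hasIntegralSpectrum_swapSum (by simp)) (doubleTranspositionSum_mem_closure U)

theorem hasIntegralSpectrum_sum_crossingDoubleTranspositions (A : Finset α) :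
    HasIntegralSpectrum 𝕜 (∑ σ ∈ crossingDoubleTranspositions A, regularMatrix 𝕜 σ) := by
  rw [sum_crossingDoubleTranspositions]
  have hAAc := commute_doubleTranspositionSum_of_disjoint (R := 𝕜) (disjoint_compl_right (a := A))
  refine Matrix.hasIntegralSpectrum_of_mem_closure (s := univ)
    (A := ![doubleTranspositionSum 𝕜 univ, doubleTranspositionSum 𝕜 A, doubleTranspositionSum 𝕜 Aᶜ])
    (fun i _ => by fin_cases i <;> exact isHermitian_doubleTranspositionSum _) ?_
    (fun i _ => by fin_cases i <;> exact hasIntegralSpectrum_doubleTranspositionSum _) ?_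
  · intro i _ j _
    fin_cases i <;> fin_cases j <;>
      simp [commute_doubleTranspositionSum_univ, (commute_doubleTranspositionSum_univ _).symm,
        hAAc, hAAc.symm]
  · have hmem (i : Fin 3) := Subring.subset_closure <| Set.mem_image_of_mem
      ![doubleTranspositionSum 𝕜 univ, doubleTranspositionSum 𝕜 A, doubleTranspositionSum 𝕜 Aᶜ]
      (mem_coe.2 (mem_univ i))
    exact sub_mem (sub_mem (hmem 0) (hmem 1)) (hmem 2)

end Integrality

theorem stmt_13_general {n k : ℕ}
    (Γ : SimpleGraph (Equiv.Perm (Fin n))) [DecidableRel Γ.Adj]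
    (hΓ : ∀ u v : Equiv.Perm (Fin n), Γ.Adj u v ↔
      orderOf (v * u⁻¹) = 2 ∧ (v * u⁻¹).support.card = 4 ∧
        (∃ a ∈ (v * u⁻¹).support, (a : ℕ) < k) ∧
        (∃ b ∈ (v * u⁻¹).support, k ≤ (b : ℕ))) :
    ∀ μ ∈ spectrum ℝ (Γ.adjMatrix ℝ), ∃ m : ℤ, μ = m := by
  set A : Finset (Fin n) := {a | (a : ℕ) < k}
  rw [Γ.adjMatrix_eq_sum_regularMatrix (C := crossingDoubleTranspositions A)]
  · exact hasIntegralSpectrum_sum_crossingDoubleTranspositions A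
  · intro u v
    simp [hΓ, crossingDoubleTranspositions, doubleTranspositions, A, not_subset, and_assoc]

theorem stmt_13 {n k : ℕ} (hk : 1 ≤ k) (hkn : k < n)
    (Γ : SimpleGraph (Equiv.Perm (Fin n))) [DecidableRel Γ.Adj]
    (hΓ : ∀ u v : Equiv.Perm (Fin n), Γ.Adj u v ↔
      orderOf (v * u⁻¹) = 2 ∧ (v * u⁻¹).support.card = 4 ∧
        (∃ a ∈ (v * u⁻¹).support, (a : ℕ) < k) ∧
        (∃ b ∈ (v * u⁻¹).support, k ≤ (b : ℕ))) :
    ∀ μ ∈ spectrum ℝ (Γ.adjMatrix ℝ), ∃ m : ℤ, μ = m :=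
  stmt_13_general Γ hΓ
end

section
/- Let n > k ≥ 2 and let S = {(a b) : a ∈ [k], b ∈ [n] \ [k]} be the set of all transpositions in S_n swapping an element of [k] with an element of [n] \ [k]. Then every real eigenvalue of the adjacency matrix of the arrangement graph A(n,k,1) is a real eigenvalue of the adjacency matrix of the Cayley graph Γ(S_n, S). -/
/-!
The map `u ↦ u⁻¹ ∘ Fin.castLE` from `Perm (Fin n)` onto the injections `Fin k ↪ Fin n` is a
covering map from the Cayley graph `Γ` onto the arrangement graph `A`: it is surjective and maps
the neighbours of `u` bijectively onto the neighbours of its image, since `swap a b * u`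
(`a < k ≤ b`) corresponds to replacing the value at position `a` by the new value `u⁻¹ b`.
Pulling an eigenvector of `A` back along a covering map gives an eigenvector of `Γ` with the same
eigenvalue.
-/

open Finset Function Matrix Equiv

theorem Matrix.mem_spectrum_iff_exists_mulVec_eq_smul {ι K : Type*} [Fintype ι] [DecidableEq ι]
    [Field K] (M : Matrix ι ι K) {μ : K} :
    μ ∈ spectrum K M ↔ ∃ v ≠ 0, M *ᵥ v = μ • v := by
  rw [← Matrix.spectrum_toLin', ← Module.End.hasEigenvalue_iff_mem_spectrum]
  constructor
  · intro h
    obtain ⟨v, hv⟩ := h.exists_hasEigenvector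
    exact ⟨v, hv.2, by simpa using Module.End.mem_eigenspace_iff.mp hv.1⟩
  · rintro ⟨v, hv0, hv⟩
    exact Module.End.hasEigenvalue_of_hasEigenvector
      ⟨Module.End.mem_eigenspace_iff.mpr (by simpa using hv), hv0⟩

namespace SimpleGraph

variable {V W R : Type*} [Fintype V] [Fintype W] {G : SimpleGraph V} {H : SimpleGraph W}
  [DecidableRel G.Adj] [DecidableRel H.Adj] {φ : V → W}

theorem adjMatrix_mulVec_comp_of_bijOn [NonAssocSemiring R]
    (hφ : ∀ v, Set.BijOn φ (G.neighborSet v) (H.neighborSet (φ v))) (f : W → R) :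
    G.adjMatrix R *ᵥ (f ∘ φ) = (H.adjMatrix R *ᵥ f) ∘ φ := by
  ext v
  simp only [Function.comp_apply, adjMatrix_mulVec_apply]
  have hbij : Set.BijOn φ (G.neighborFinset v) (H.neighborFinset (φ v)) := by
    simpa only [coe_neighborFinset] using hφ v
  exact Finset.sum_nbij φ (fun _ h => hbij.mapsTo h) hbij.injOn hbij.surjOn fun _ _ => rfl

theorem mem_spectrum_adjMatrix_of_bijOn [DecidableEq V] [DecidableEq W] [Field R]
    (hsurj : Surjective φ) (hφ : ∀ v, Set.BijOn φ (G.neighborSet v) (H.neighborSet (φ v)))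
    {μ : R} (hμ : μ ∈ spectrum R (H.adjMatrix R)) : μ ∈ spectrum R (G.adjMatrix R) := by
  rw [mem_spectrum_iff_exists_mulVec_eq_smul] at hμ ⊢
  obtain ⟨f, hf0, hf⟩ := hμ
  refine ⟨f ∘ φ, fun h => hf0 ?_, ?_⟩
  · exact funext fun w => by obtain ⟨v, rfl⟩ := hsurj w; exact congrFun h v
  · rw [adjMatrix_mulVec_comp_of_bijOn hφ, hf]
    rfl

end SimpleGraph

theorem Finset.card_filter_ne_eq_one_iff {α β : Type*} [Fintype α] [DecidableEq α]
    [DecidableEq β] {f g : α → β} :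
    #{i | f i ≠ g i} = 1 ↔ ∃ i y, y ≠ f i ∧ g = update f i y := by
  rw [card_eq_one]
  constructor
  · rintro ⟨i, hi⟩
    have hdiff : ∀ j, f j ≠ g j ↔ j = i := fun j => by simpa using congrArg (j ∈ ·) hi
    refine ⟨i, g i, ((hdiff i).mpr rfl).symm, funext fun j => ?_⟩
    by_cases hj : j = i
    · subst hj; simp
    · rw [update_of_ne hj]
      exact (not_not.mp (mt (hdiff j).mp hj)).symm
  · rintro ⟨i, y, hy, rfl⟩
    refine ⟨i, ext fun j => ?_⟩
    by_cases hj : j = i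
    · subst hj; simpa using hy.symm
    · simp [hj]

theorem Function.Embedding.notMem_range_of_update {α β : Type*} [DecidableEq α] {p q : α ↪ β}
    {i : α} {y : β} (hy : y ≠ p i) (hq : ⇑q = update p i y) : y ∉ Set.range p := by
  rintro ⟨j, rfl⟩
  have hji : j ≠ i := fun h => hy (h ▸ rfl)
  have : q j = q i := by simp [hq, hji]
  exact hji (q.injective this)

theorem Function.eq_and_eq_of_update_eq_update {α β : Type*} [DecidableEq α] {f : α → β}
    {i₁ i₂ : α} {y₁ y₂ : β} (hy₁ : y₁ ≠ f i₁) (h : update f i₁ y₁ = update f i₂ y₂) :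
    i₁ = i₂ ∧ y₁ = y₂ := by
  have hi : i₁ = i₂ := by
    by_contra hne
    exact hy₁ (by simpa [hne] using congrFun h i₁)
  subst hi
  exact ⟨rfl, update_injective f i₁ h⟩

section

variable {n k : ℕ}

/-- Taking the inverse makes left multiplication by `swap a b` with `a < k ≤ b` change the image
in the single position `a`. -/
def invRestrict (h : k ≤ n) (u : Perm (Fin n)) : Fin k ↪ Fin n :=
  (Fin.castLEEmb h).trans u⁻¹.toEmbedding

@[simp]
theorem invRestrict_apply (h : k ≤ n) (u : Perm (Fin n)) (i : Fin k) :
    invRestrict h u i = u⁻¹ (Fin.castLE h i) :=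
  rfl

theorem invRestrict_surjective (h : k ≤ n) : Surjective (invRestrict h) := by
  intro p
  obtain ⟨σ, hσ⟩ := Perm.exists_extending_pair _ _ (Fin.castLE_injective h) p.injective
  exact ⟨σ⁻¹, DFunLike.ext _ _ fun i => by simp [hσ]⟩

theorem mem_range_invRestrict_iff (h : k ≤ n) (u : Perm (Fin n)) (y : Fin n) :
    y ∈ Set.range (invRestrict h u) ↔ (u y : ℕ) < k := by
  simp only [Set.mem_range, invRestrict_apply, Perm.inv_eq_iff_eq]
  exact ⟨fun ⟨i, hi⟩ => hi ▸ i.isLt, fun hy => ⟨⟨u y, hy⟩, rfl⟩⟩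

theorem invRestrict_swap_mul (h : k ≤ n) (u : Perm (Fin n)) (i : Fin k) {b : Fin n}
    (hb : k ≤ b) :
    ⇑(invRestrict h (swap (Fin.castLE h i) b * u)) = update (invRestrict h u) i (u⁻¹ b) := by
  ext j
  by_cases hji : j = i
  · subst hji; simp
  · have hjb : Fin.castLE h j ≠ b := fun hc => absurd hb (not_le.mpr (hc ▸ j.isLt))
    have hji' : Fin.castLE h j ≠ Fin.castLE h i := (Fin.castLE_injective h).ne hji
    simp [hji, swap_apply_of_ne_of_ne hji' hjb]

variable {A : SimpleGraph (Fin k ↪ Fin n)} {Γ : SimpleGraph (Perm (Fin n))}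

theorem mem_neighborSet_iff_eq_update_of_adj_iff (hA : ∀ p q : Fin k ↪ Fin n, A.Adj p q ↔
      (Finset.univ.filter fun i : Fin k => p i ≠ q i).card = 1) (p q : Fin k ↪ Fin n) :
    q ∈ A.neighborSet p ↔ ∃ i y, y ≠ p i ∧ ⇑q = update p i y := by
  rw [SimpleGraph.mem_neighborSet, hA, card_filter_ne_eq_one_iff]

theorem mem_neighborSet_iff_eq_swap_mul_of_adj_iff (h : k ≤ n)
    (hΓ : ∀ u v : Perm (Fin n), Γ.Adj u v ↔
      ∃ a b : Fin n, (a : ℕ) < k ∧ k ≤ (b : ℕ) ∧ v * u⁻¹ = swap a b) (u v : Perm (Fin n)) :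
    v ∈ Γ.neighborSet u ↔
      ∃ (i : Fin k) (b : Fin n), k ≤ (b : ℕ) ∧ v = swap (Fin.castLE h i) b * u := by
  rw [SimpleGraph.mem_neighborSet, hΓ]
  constructor
  · rintro ⟨a, b, ha, hb, hvu⟩
    exact ⟨⟨a, ha⟩, b, hb, mul_inv_eq_iff_eq_mul.mp hvu⟩
  · rintro ⟨i, b, hb, rfl⟩
    exact ⟨Fin.castLE h i, b, i.isLt, hb, mul_inv_eq_iff_eq_mul.mpr rfl⟩

theorem bijOn_invRestrict_neighborSet (h : k ≤ n) (hA : ∀ p q : Fin k ↪ Fin n, A.Adj p q ↔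
      (Finset.univ.filter fun i : Fin k => p i ≠ q i).card = 1)
    (hΓ : ∀ u v : Perm (Fin n), Γ.Adj u v ↔
      ∃ a b : Fin n, (a : ℕ) < k ∧ k ≤ (b : ℕ) ∧ v * u⁻¹ = swap a b) (u : Perm (Fin n)) :
    Set.BijOn (invRestrict h) (Γ.neighborSet u) (A.neighborSet (invRestrict h u)) := by
  have hne {b : Fin n} (hb : k ≤ (b : ℕ)) (i : Fin k) : u⁻¹ b ≠ invRestrict h u i :=
    fun hc => (mem_range_invRestrict_iff h u _).not.mpr (by simpa using hb) ⟨i, hc.symm⟩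
  refine ⟨?mapsTo, ?injOn, ?surjOn⟩
  case mapsTo =>
    rintro v hv
    obtain ⟨i, b, hb, rfl⟩ := (mem_neighborSet_iff_eq_swap_mul_of_adj_iff h hΓ u v).mp hv
    exact (mem_neighborSet_iff_eq_update_of_adj_iff hA _ _).mpr
      ⟨i, u⁻¹ b, hne hb i, invRestrict_swap_mul h u i hb⟩
  case injOn =>
    rintro v₁ hv₁ v₂ hv₂ hv
    obtain ⟨i₁, b₁, hb₁, rfl⟩ := (mem_neighborSet_iff_eq_swap_mul_of_adj_iff h hΓ u v₁).mp hv₁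
    obtain ⟨i₂, b₂, hb₂, rfl⟩ := (mem_neighborSet_iff_eq_swap_mul_of_adj_iff h hΓ u v₂).mp hv₂
    have hupd := congrArg DFunLike.coe hv
    rw [invRestrict_swap_mul h u i₁ hb₁, invRestrict_swap_mul h u i₂ hb₂] at hupd
    obtain ⟨rfl, hb⟩ := eq_and_eq_of_update_eq_update (hne hb₁ i₁) hupd
    rw [u⁻¹.injective hb]
  case surjOn =>
    rintro q hq
    obtain ⟨i, y, hy, hq⟩ := (mem_neighborSet_iff_eq_update_of_adj_iff hA _ _).mp hq
    have hk : k ≤ (u y : ℕ) := not_lt.mp <|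
      (mem_range_invRestrict_iff h u y).not.mp (Embedding.notMem_range_of_update hy hq)
    refine ⟨swap (Fin.castLE h i) (u y) * u,
      (mem_neighborSet_iff_eq_swap_mul_of_adj_iff h hΓ u _).mpr ⟨i, u y, hk, rfl⟩,
      DFunLike.coe_injective ?_⟩
    rw [invRestrict_swap_mul h u i hk, hq, Perm.inv_eq_iff_eq.mpr rfl]

end

theorem stmt_19_general {n k : ℕ} (hkn : k < n)
    (A : SimpleGraph (Fin k ↪ Fin n)) [DecidableRel A.Adj]
    (hA : ∀ p q : Fin k ↪ Fin n, A.Adj p q ↔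
      (Finset.univ.filter fun i : Fin k => p i ≠ q i).card = 1)
    (Γ : SimpleGraph (Equiv.Perm (Fin n))) [DecidableRel Γ.Adj]
    (hΓ : ∀ u v : Equiv.Perm (Fin n), Γ.Adj u v ↔
      ∃ a b : Fin n, (a : ℕ) < k ∧ k ≤ (b : ℕ) ∧ v * u⁻¹ = Equiv.swap a b) :
    ∀ μ ∈ spectrum ℝ (A.adjMatrix ℝ), μ ∈ spectrum ℝ (Γ.adjMatrix ℝ) := fun _ hμ =>
  SimpleGraph.mem_spectrum_adjMatrix_of_bijOn (invRestrict_surjective hkn.le)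
    (bijOn_invRestrict_neighborSet hkn.le hA hΓ) hμ

theorem stmt_19 {n k : ℕ} (hk : 2 ≤ k) (hkn : k < n)
    (A : SimpleGraph (Fin k ↪ Fin n)) [DecidableRel A.Adj]
    (hA : ∀ p q : Fin k ↪ Fin n, A.Adj p q ↔
      (Finset.univ.filter fun i : Fin k => p i ≠ q i).card = 1)
    (Γ : SimpleGraph (Equiv.Perm (Fin n))) [DecidableRel Γ.Adj]
    (hΓ : ∀ u v : Equiv.Perm (Fin n), Γ.Adj u v ↔
      ∃ a b : Fin n, (a : ℕ) < k ∧ k ≤ (b : ℕ) ∧ v * u⁻¹ = Equiv.swap a b) :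
    ∀ μ ∈ spectrum ℝ (A.adjMatrix ℝ), μ ∈ spectrum ℝ (Γ.adjMatrix ℝ) :=
  stmt_19_general hkn A hA Γ hΓ
end
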